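/- Let h : ℝ → ℝ be twice continuously differentiable with |h''| bounded near the relevant points, f : ℝ^d → ℝ differentiable, and define for each i the function Δᵢ(δ) = ℓ(f(zᵢ + δ), yᵢ) − ℓ(f(zᵢ), yᵢ) with ℓ(q,y) = h(q) − yq, where f is twice differentiable at zᵢ. Then for each ε ≥ 0, (1/n)Σᵢ max_{‖δᵢ‖₂ ≤ ε} ℓ(f(zᵢ+δᵢ),yᵢ) − (1/n)Σᵢ ℓ(f(zᵢ),yᵢ) ≤ (1/n)Σᵢ |h'(f(zᵢ)) − yᵢ|·‖∇f(zᵢ)‖₂·ε + (1/(2n))Σᵢ |h''(f(zᵢ))|·‖∇f(zᵢ)‖₂²·ε² + (1/n)Σᵢ ε²·φᵢ(ε), for some functions φᵢ with lim_{ε→0} φᵢ(ε) = 0, assuming ∇²f(zᵢ) = 0. -/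

import Mathlib

open Filter Finset

/-- Second-order Taylor bound for a scalar function at a point. -/
lemma taylor_scalar (h h' : ℝ → ℝ) (H q c : ℝ)
    (hh' : ∀ t, HasDerivAt h (h' t) t)
    (hH : HasDerivAt h' H q) (hc : 0 < c) :
    ∃ ρ > 0, ∀ s : ℝ, |s| ≤ ρ →
      |h (q + s) - h q - h' q * s - H / 2 * s ^ 2| ≤ c * s ^ 2 := by
  have hlo := (hasDerivAt_iff_isLittleO.mp hH).bound hc
  rw [Metric.eventually_nhds_iff] at hlo
  obtain ⟨ρ, hρ, hball⟩ := hlo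
  refine ⟨ρ / 2, by linarith, ?_⟩
  intro s hs
  have hb : ∀ u : ℝ, |u| ≤ ρ / 2 → |h' (q + u) - h' q - u * H| ≤ c * |u| := by
    intro u hu
    have hd : dist (q + u) q < ρ := by
      rw [Real.dist_eq]; simp only [add_sub_cancel_left]; linarith
    have := hball hd
    simpa [Real.norm_eq_abs, smul_eq_mul, add_sub_cancel_left, mul_comm] using this
  set G : ℝ → ℝ := fun t => h (q + t * s) - t * (s * h' q) - t ^ 2 * (s ^ 2 * (H / 2))
    with hGdef
  have hG' : ∀ t ∈ Set.Icc (0:ℝ) 1,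
      HasDerivWithinAt G (s * (h' (q + t * s) - h' q - (t * s) * H)) (Set.Icc 0 1) t := by
    intro t _
    have h1 : HasDerivAt (fun t : ℝ => q + t * s) (1 * s) t :=
      ((hasDerivAt_id t).mul_const s).const_add q
    have h2 : HasDerivAt (fun t => h (q + t * s)) (h' (q + t * s) * (1 * s)) t :=
      (hh' (q + t * s)).comp t h1
    have h3 : HasDerivAt (fun t : ℝ => t * (s * h' q)) (1 * (s * h' q)) t :=
      (hasDerivAt_id t).mul_const _
    have h4 : HasDerivAt (fun t : ℝ => t ^ 2 * (s ^ 2 * (H / 2)))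
        (((2 : ℕ) : ℝ) * t ^ (2 - 1) * (s ^ 2 * (H / 2))) t :=
      (hasDerivAt_pow 2 t).mul_const _
    have h5 := (h2.sub h3).sub h4
    have : HasDerivAt G (s * (h' (q + t * s) - h' q - (t * s) * H)) t := by
      refine h5.congr_deriv ?_
      push_cast
      ring
    exact this.hasDerivWithinAt
  have hbound : ∀ t ∈ Set.Icc (0:ℝ) 1,
      ‖s * (h' (q + t * s) - h' q - (t * s) * H)‖ ≤ c * s ^ 2 := by
    intro t ht
    obtain ⟨ht0, ht1⟩ := ht
    have hts : |t * s| ≤ |s| := by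
      rw [abs_mul, abs_of_nonneg ht0]
      nlinarith [abs_nonneg s]
    have h6 := hb (t * s) (hts.trans hs)
    rw [Real.norm_eq_abs, abs_mul]
    have h7 : |h' (q + t * s) - h' q - t * s * H| ≤ c * |s| :=
      h6.trans (by nlinarith [abs_nonneg s, abs_nonneg (t*s)])
    calc |s| * |h' (q + t * s) - h' q - t * s * H| ≤ |s| * (c * |s|) :=
          mul_le_mul_of_nonneg_left h7 (abs_nonneg s)
      _ = c * s ^ 2 := by rw [← sq_abs s]; ring
  have hmv := Convex.norm_image_sub_le_of_norm_hasDerivWithin_le hG' hbound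
    (convex_Icc 0 1) (Set.left_mem_Icc.mpr zero_le_one) (Set.right_mem_Icc.mpr zero_le_one)
  have hEq : h (q + s) - h q - h' q * s - H / 2 * s ^ 2 = G 1 - G 0 := by
    simp only [hGdef]
    ring_nf
  rw [hEq]
  calc |G 1 - G 0| = ‖G 1 - G 0‖ := (Real.norm_eq_abs _).symm
    _ ≤ c * s ^ 2 * ‖(1:ℝ) - 0‖ := hmv
    _ = c * s ^ 2 := by simp

/-- Second-order Taylor bound for `f` at a point where the Hessian vanishes. -/
lemma taylor_vec {d : ℕ} (f : EuclideanSpace ℝ (Fin d) → ℝ)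
    (gradf : EuclideanSpace ℝ (Fin d) → EuclideanSpace ℝ (Fin d))
    (hgrad : ∀ x, HasGradientAt f (gradf x) x) (z : EuclideanSpace ℝ (Fin d))
    (hhess : HasFDerivAt gradf
      (0 : EuclideanSpace ℝ (Fin d) →L[ℝ] EuclideanSpace ℝ (Fin d)) z)
    (η : ℝ) (hη : 0 < η) :
    ∃ r > 0, ∀ δ : EuclideanSpace ℝ (Fin d), ‖δ‖ ≤ r →
      |f (z + δ) - f z - (inner ℝ (gradf z) δ : ℝ)| ≤ η * ‖δ‖ ^ 2 := by
  have hlo := (hasFDerivAt_iff_isLittleO_nhds_zero.mp hhess).bound hη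
  rw [Metric.eventually_nhds_iff] at hlo
  obtain ⟨r, hr, hball⟩ := hlo
  refine ⟨r / 2, by linarith, ?_⟩
  intro δ hδ
  have hgb : ∀ u : EuclideanSpace ℝ (Fin d), ‖u‖ ≤ r / 2 →
      ‖gradf (z + u) - gradf z‖ ≤ η * ‖u‖ := by
    intro u hu
    have hd : dist u 0 < r := by rw [dist_zero_right]; linarith
    have := hball hd
    simpa using this
  set F : ℝ → ℝ := fun t => f (z + t • δ) - t * (inner ℝ (gradf z) δ : ℝ) with hFdef
  have hF' : ∀ t ∈ Set.Icc (0:ℝ) 1,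
      HasDerivWithinAt F ((inner ℝ (gradf (z + t • δ)) δ : ℝ) - (inner ℝ (gradf z) δ : ℝ))
        (Set.Icc 0 1) t := by
    intro t _
    have hγ : HasDerivAt (fun t : ℝ => z + t • δ) δ t := by
      simpa using (((hasDerivAt_id t).smul_const δ).const_add z)
    have hcomp : HasDerivAt (fun t : ℝ => f (z + t • δ))
        ((InnerProductSpace.toDual ℝ _ (gradf (z + t • δ))) δ) t :=
      (hgrad (z + t • δ)).hasFDerivAt.comp_hasDerivAt t hγ
    have h3 : HasDerivAt (fun t : ℝ => t * (inner ℝ (gradf z) δ : ℝ))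
        (1 * (inner ℝ (gradf z) δ : ℝ)) t := (hasDerivAt_id t).mul_const _
    have := hcomp.sub h3
    have h4 : HasDerivAt F ((inner ℝ (gradf (z + t • δ)) δ : ℝ) - (inner ℝ (gradf z) δ : ℝ)) t := by
      refine this.congr_deriv ?_
      rw [InnerProductSpace.toDual_apply_apply]
      ring
    exact h4.hasDerivWithinAt
  have hbound : ∀ t ∈ Set.Icc (0:ℝ) 1,
      ‖(inner ℝ (gradf (z + t • δ)) δ : ℝ) - (inner ℝ (gradf z) δ : ℝ)‖ ≤ η * ‖δ‖ ^ 2 := by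
    intro t ht
    obtain ⟨ht0, ht1⟩ := ht
    have h1 : (inner ℝ (gradf (z + t • δ)) δ : ℝ) - (inner ℝ (gradf z) δ : ℝ)
        = (inner ℝ (gradf (z + t • δ) - gradf z) δ : ℝ) := (inner_sub_left _ _ _).symm
    rw [h1]
    have hts : ‖t • δ‖ ≤ ‖δ‖ := by
      rw [norm_smul, Real.norm_eq_abs, abs_of_nonneg ht0]
      nlinarith [norm_nonneg δ]
    have h2 := hgb (t • δ) (hts.trans hδ)
    calc ‖(inner ℝ (gradf (z + t • δ) - gradf z) δ : ℝ)‖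
        ≤ ‖gradf (z + t • δ) - gradf z‖ * ‖δ‖ := norm_inner_le_norm _ _
      _ ≤ (η * ‖t • δ‖) * ‖δ‖ := mul_le_mul_of_nonneg_right h2 (norm_nonneg δ)
      _ ≤ η * ‖δ‖ ^ 2 := by
          have h9 : ‖t • δ‖ * ‖δ‖ ≤ ‖δ‖ * ‖δ‖ := mul_le_mul_of_nonneg_right hts (norm_nonneg δ)
          nlinarith [h9, hη.le]
  have hmv := Convex.norm_image_sub_le_of_norm_hasDerivWithin_le hF' hbound
    (convex_Icc 0 1) (Set.left_mem_Icc.mpr zero_le_one) (Set.right_mem_Icc.mpr zero_le_one)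
  have hEq : f (z + δ) - f z - (inner ℝ (gradf z) δ : ℝ) = F 1 - F 0 := by
    simp only [hFdef, one_smul, zero_smul, add_zero, one_mul, zero_mul]
    ring
  rw [hEq]
  calc |F 1 - F 0| = ‖F 1 - F 0‖ := (Real.norm_eq_abs _).symm
    _ ≤ η * ‖δ‖ ^ 2 * ‖(1:ℝ) - 0‖ := hmv
    _ = η * ‖δ‖ ^ 2 := by simp

set_option maxHeartbeats 1600000 in
/-- Pointwise key bound: the adversarial loss increase is bounded to second order. -/
lemma key_bound {d : ℕ} (h h' h'' : ℝ → ℝ)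
    (hh' : ∀ t, HasDerivAt h (h' t) t) (hh'' : ∀ t, HasDerivAt h' (h'' t) t)
    (f : EuclideanSpace ℝ (Fin d) → ℝ)
    (gradf : EuclideanSpace ℝ (Fin d) → EuclideanSpace ℝ (Fin d))
    (hgrad : ∀ x, HasGradientAt f (gradf x) x)
    (z : EuclideanSpace ℝ (Fin d)) (y : ℝ)
    (hhess : HasFDerivAt gradf
      (0 : EuclideanSpace ℝ (Fin d) →L[ℝ] EuclideanSpace ℝ (Fin d)) z)
    (c : ℝ) (hc : 0 < c) :
    ∃ ε₀ > 0, ∀ ε : ℝ, 0 < ε → ε ≤ ε₀ → ∀ δ : EuclideanSpace ℝ (Fin d), ‖δ‖ ≤ ε →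
      (h (f (z + δ)) - y * f (z + δ)) - (h (f z) - y * f z) ≤
        |h' (f z) - y| * ‖gradf z‖ * ε
          + |h'' (f z)| * ‖gradf z‖ ^ 2 / 2 * ε ^ 2 + c * ε ^ 2 := by
  set q := f z with hq
  set G := ‖gradf z‖ with hGdef
  have hG0 : 0 ≤ G := norm_nonneg _
  set A := |h' q - y| with hA
  have hA0 : 0 ≤ A := abs_nonneg _
  set B := |h'' q| with hB
  have hB0 : 0 ≤ B := abs_nonneg _
  have hc₁ : 0 < c / (3 * (G + 1) ^ 2) := by positivity
  obtain ⟨ρ, hρ, htay⟩ := taylor_scalar h h' (h'' q) q _ hh' (hh'' q) hc₁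
  set η := min 1 (c / (3 * (A + B / 2 * (2 * G + 1) + 1))) with hηdef
  have hη0 : 0 < η := lt_min one_pos (by positivity)
  have hη1 : η ≤ 1 := min_le_left _ _
  obtain ⟨r, hr, hf2⟩ := taylor_vec f gradf hgrad z hhess η hη0
  refine ⟨min 1 (min r (ρ / (G + 1))), by positivity, ?_⟩
  intro ε hε0 hεle δ hδ
  have hε1 : ε ≤ 1 := hεle.trans (min_le_left _ _)
  have hεr : ε ≤ r := hεle.trans ((min_le_right _ _).trans (min_le_left _ _))
  have hερ : ε ≤ ρ / (G + 1) := hεle.trans ((min_le_right _ _).trans (min_le_right _ _))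
  have hεsq : ε ^ 2 ≤ ε := by
    have := mul_le_mul_of_nonneg_left hε1 hε0.le
    linarith only [this]
  have hε3 : ε ^ 3 ≤ ε ^ 2 := by
    have := mul_le_mul_of_nonneg_left hε1 (sq_nonneg ε)
    linarith only [this]
  have hε4 : ε ^ 4 ≤ ε ^ 2 := by
    have := mul_le_mul_of_nonneg_left hεsq (sq_nonneg ε)
    linarith only [this, hε3]
  set s := f (z + δ) - q with hsdef
  have hip : |(inner ℝ (gradf z) δ : ℝ)| ≤ G * ε :=
    (abs_real_inner_le_norm _ _).trans (mul_le_mul_of_nonneg_left hδ hG0)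
  have h2 : |s - (inner ℝ (gradf z) δ : ℝ)| ≤ η * ε ^ 2 := by
    have h2a := hf2 δ (hδ.trans hεr)
    have hδε : ‖δ‖ ^ 2 ≤ ε ^ 2 := by
      have := mul_le_mul_of_nonneg_left hδ (norm_nonneg δ)
      have h2b := mul_le_mul_of_nonneg_right hδ hε0.le
      nlinarith [norm_nonneg δ]
    have h2c : |f (z + δ) - f z - (inner ℝ (gradf z) δ : ℝ)| ≤ η * ε ^ 2 :=
      h2a.trans (mul_le_mul_of_nonneg_left hδε hη0.le)
    simpa [hsdef, hq] using h2c
  have hs1 : |s| ≤ G * ε + η * ε ^ 2 := by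
    have h3 := abs_add_le (inner ℝ (gradf z) δ : ℝ) (s - (inner ℝ (gradf z) δ : ℝ))
    simp only [add_sub_cancel] at h3
    linarith
  have habs : 0 ≤ |s| := abs_nonneg s
  have hηε : η * ε ^ 2 ≤ ε := by
    have := mul_le_mul_of_nonneg_right hη1 (sq_nonneg ε)
    linarith only [this, hεsq]
  have hs2 : |s| ≤ (G + 1) * ε := by nlinarith [hs1, hηε]
  have hsρ : |s| ≤ ρ := by
    have hG1 : (0:ℝ) < G + 1 := by linarith
    have h5 : (G + 1) * ε ≤ ρ := by
      rw [le_div_iff₀ hG1] at hερ; linarith [hερ]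
    linarith
  have htb := htay s hsρ
  have hfq : f (z + δ) = q + s := by rw [hsdef]; ring
  rw [hfq]
  have hle : η ≤ c / (3 * (A + B / 2 * (2 * G + 1) + 1)) := min_le_right _ _
  clear_value q G A B η s
  have hsq : s ^ 2 ≤ G ^ 2 * ε ^ 2 + η * (2 * G + 1) * ε ^ 2 := by
    have k3 : s ^ 2 ≤ (G * ε + η * ε ^ 2) ^ 2 := by
      rw [← sq_abs s]
      exact pow_le_pow_left₀ habs hs1 2
    have e : (G * ε + η * ε ^ 2) ^ 2 = G ^ 2 * ε ^ 2 + 2 * G * η * ε ^ 3 + η ^ 2 * ε ^ 4 := by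
      ring
    have k1 : 2 * G * η * ε ^ 3 ≤ 2 * G * η * ε ^ 2 :=
      mul_le_mul_of_nonneg_left hε3 (by nlinarith [mul_nonneg hG0 hη0.le])
    have k2 : η ^ 2 * ε ^ 4 ≤ η * ε ^ 2 := by
      have hη2 : η ^ 2 ≤ η := by
        have := mul_le_mul_of_nonneg_left hη1 hη0.le
        linarith only [this]
      exact mul_le_mul hη2 hε4 (by positivity) hη0.le
    linarith only [k1, k2, k3, e]
  have hηb : η * (A + B / 2 * (2 * G + 1)) ≤ c / 3 := by
    have hX0 : (0:ℝ) ≤ A + B / 2 * (2 * G + 1) := by nlinarith [hA0, hB0, hG0, mul_nonneg hB0 hG0]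
    calc η * (A + B / 2 * (2 * G + 1))
        ≤ c / (3 * (A + B / 2 * (2 * G + 1) + 1)) * (A + B / 2 * (2 * G + 1)) :=
          mul_le_mul_of_nonneg_right hle hX0
      _ ≤ c / 3 := by
          rw [div_mul_eq_mul_div, div_le_div_iff₀ (by nlinarith [hX0]) (by norm_num : (0:ℝ) < 3)]
          nlinarith [mul_nonneg hc.le hX0, hc.le]
  have t1 : h (q + s) - h q - h' q * s - h'' q / 2 * s ^ 2 ≤ c / (3 * (G + 1) ^ 2) * s ^ 2 :=
    (le_abs_self _).trans htb
  have t2 : (h' q - y) * s ≤ A * |s| := by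
    calc (h' q - y) * s ≤ |(h' q - y) * s| := le_abs_self _
      _ = A * |s| := by rw [abs_mul, hA]
  have t3 : h'' q / 2 * s ^ 2 ≤ B / 2 * s ^ 2 := by
    have hb2 : h'' q ≤ B := by rw [hB]; exact le_abs_self _
    have := mul_le_mul_of_nonneg_right hb2 (sq_nonneg s)
    linarith only [this]
  have hs2sq : s ^ 2 ≤ (G + 1) ^ 2 * ε ^ 2 := by
    have h7 := pow_le_pow_left₀ habs hs2 2
    rw [sq_abs] at h7
    nlinarith [h7]
  have t4 : c / (3 * (G + 1) ^ 2) * s ^ 2 ≤ c / 3 * ε ^ 2 := by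
    have hG1 : G + 1 ≠ 0 := by intro hcontra; nlinarith [hG0]
    have key : c / (3 * (G + 1) ^ 2) * ((G + 1) ^ 2 * ε ^ 2) = c / 3 * ε ^ 2 := by
      field_simp
    have h8 := mul_le_mul_of_nonneg_left hs2sq hc₁.le
    linarith only [key, h8]
  have t5 : A * |s| ≤ A * G * ε + A * η * ε ^ 2 := by
    have := mul_le_mul_of_nonneg_left hs1 hA0
    linarith only [this]
  have t6 : B / 2 * s ^ 2 ≤ B / 2 * G ^ 2 * ε ^ 2 + B / 2 * η * (2 * G + 1) * ε ^ 2 := by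
    have := mul_le_mul_of_nonneg_left hsq (by linarith [hB0] : (0:ℝ) ≤ B / 2)
    linarith only [this]
  have t7 : A * η * ε ^ 2 + B / 2 * η * (2 * G + 1) * ε ^ 2 ≤ c / 3 * ε ^ 2 := by
    have := mul_le_mul_of_nonneg_right hηb (sq_nonneg ε)
    linarith only [this]
  have e1 : h (q + s) - y * (q + s) - (h q - y * q)
      = (h (q + s) - h q - h' q * s - h'' q / 2 * s ^ 2) + (h' q - y) * s
        + h'' q / 2 * s ^ 2 := by ring
  rw [e1]
  have hc3 : c / 3 * ε ^ 2 + c / 3 * ε ^ 2 ≤ c * ε ^ 2 := by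
    have := mul_nonneg hc.le (sq_nonneg ε)
    linarith only [this]
  linarith only [t1, t2, t3, t4, t5, t6, t7, hc3]

set_option maxHeartbeats 1600000 in
theorem stmt_18 (n d : ℕ) (hn : 0 < n)
    (h h' h'' : ℝ → ℝ)
    (hh' : ∀ t, HasDerivAt h (h' t) t) (hh'' : ∀ t, HasDerivAt h' (h'' t) t)
    (hcont : Continuous h'')
    (f : EuclideanSpace ℝ (Fin d) → ℝ)
    (gradf : EuclideanSpace ℝ (Fin d) → EuclideanSpace ℝ (Fin d))
    (hgrad : ∀ x, HasGradientAt f (gradf x) x)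
    (z : Fin n → EuclideanSpace ℝ (Fin d)) (y : Fin n → ℝ)
    (hhess : ∀ i, HasFDerivAt gradf
      (0 : EuclideanSpace ℝ (Fin d) →L[ℝ] EuclideanSpace ℝ (Fin d)) (z i)) :
    ∃ φ : Fin n → ℝ → ℝ, (∀ i, Tendsto (φ i) (nhds 0) (nhds 0)) ∧
      ∀ ε : ℝ, 0 ≤ ε →
        (1 / (n : ℝ)) * ∑ i, (⨆ δ : {δ : EuclideanSpace ℝ (Fin d) // ‖δ‖ ≤ ε},
            (h (f (z i + δ.1)) - y i * f (z i + δ.1)))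
          - (1 / (n : ℝ)) * ∑ i, (h (f (z i)) - y i * f (z i))
        ≤ (1 / (n : ℝ)) * ∑ i, |h' (f (z i)) - y i| * ‖gradf (z i)‖ * ε
          + (1 / (2 * (n : ℝ))) * ∑ i, |h'' (f (z i))| * ‖gradf (z i)‖ ^ 2 * ε ^ 2
          + (1 / (n : ℝ)) * ∑ i, ε ^ 2 * φ i ε := by
  classical
  set S : Fin n → ℝ → ℝ := fun i ε =>
    ⨆ δ : {δ : EuclideanSpace ℝ (Fin d) // ‖δ‖ ≤ ε},
      (h (f (z i + δ.1)) - y i * f (z i + δ.1)) with hSdef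
  set L : Fin n → ℝ := fun i => h (f (z i)) - y i * f (z i) with hLdef
  set A : Fin n → ℝ := fun i => |h' (f (z i)) - y i| * ‖gradf (z i)‖ with hAdef
  set B : Fin n → ℝ := fun i => |h'' (f (z i))| * ‖gradf (z i)‖ ^ 2 / 2 with hBdef
  set φ : Fin n → ℝ → ℝ := fun i ε =>
    if ε ≤ 0 then 0
    else max 0 ((S i ε - L i - A i * ε - B i * ε ^ 2) / ε ^ 2) with hφdef
  refine ⟨φ, ?_, ?_⟩
  · -- Tendsto
    intro i
    rw [Metric.tendsto_nhds]
    intro c hc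
    obtain ⟨ε₀, hε₀, hkey⟩ := key_bound h h' h'' hh' hh'' f gradf hgrad (z i) (y i)
      (hhess i) (c / 2) (by linarith)
    rw [Metric.eventually_nhds_iff]
    refine ⟨ε₀, hε₀, ?_⟩
    intro ε hεd
    rw [Real.dist_eq, sub_zero] at hεd
    rw [Real.dist_eq, sub_zero]
    by_cases hle : ε ≤ 0
    · simp [hφdef, hle, hc]
    · push_neg at hle
      have hεε₀ : ε ≤ ε₀ := by
        have := abs_lt.mp hεd
        linarith [this.2]
      have hε2 : (0:ℝ) < ε ^ 2 := by positivity
      haveI : Nonempty {δ : EuclideanSpace ℝ (Fin d) // ‖δ‖ ≤ ε} :=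
        ⟨⟨0, by simp; linarith⟩⟩
      have hSle : S i ε ≤ L i + A i * ε + B i * ε ^ 2 + (c / 2) * ε ^ 2 := by
        rw [hSdef]
        apply ciSup_le
        intro δ
        have := hkey ε hle hεε₀ δ.1 δ.2
        simp only [hLdef, hAdef, hBdef]
        linarith
      have hQ : (S i ε - L i - A i * ε - B i * ε ^ 2) / ε ^ 2 ≤ c / 2 := by
        rw [div_le_iff₀ hε2]
        linarith
      have hφval : φ i ε = max 0 ((S i ε - L i - A i * ε - B i * ε ^ 2) / ε ^ 2) := by
        simp [hφdef, not_le.mpr hle]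
      rw [hφval, abs_of_nonneg (le_max_left _ _)]
      apply max_lt hc
      linarith
  · -- Inequality
    intro ε hε
    have hn0 : (0:ℝ) < (n:ℝ) := by exact_mod_cast hn
    have hterm : ∀ i, S i ε ≤ L i + A i * ε + B i * ε ^ 2 + ε ^ 2 * φ i ε := by
      intro i
      rcases eq_or_lt_of_le hε with heq | hpos
      · -- ε = 0
        subst heq
        haveI : Nonempty {δ : EuclideanSpace ℝ (Fin d) // ‖δ‖ ≤ (0:ℝ)} :=
          ⟨⟨0, by simp⟩⟩
        have hconst : ∀ δ : {δ : EuclideanSpace ℝ (Fin d) // ‖δ‖ ≤ (0:ℝ)},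
            h (f (z i + δ.1)) - y i * f (z i + δ.1) = L i := by
          rintro ⟨δ, hδ⟩
          have : δ = 0 := norm_le_zero_iff.mp hδ
          simp [this, hLdef]
        have hS0 : S i 0 = L i := by
          rw [hSdef]
          calc (⨆ δ : {δ : EuclideanSpace ℝ (Fin d) // ‖δ‖ ≤ (0:ℝ)},
              (h (f (z i + δ.1)) - y i * f (z i + δ.1)))
              = ⨆ _ : {δ : EuclideanSpace ℝ (Fin d) // ‖δ‖ ≤ (0:ℝ)}, L i :=
                iSup_congr hconst
            _ = L i := ciSup_const
        have hφ0 : φ i 0 = 0 := by simp [hφdef]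
        rw [hS0, hφ0]
        simp
      · -- ε > 0
        have hε2 : (0:ℝ) < ε ^ 2 := by positivity
        have hφval : φ i ε = max 0 ((S i ε - L i - A i * ε - B i * ε ^ 2) / ε ^ 2) := by
          simp [hφdef, not_le.mpr hpos]
        have h1 : (S i ε - L i - A i * ε - B i * ε ^ 2) / ε ^ 2 ≤ φ i ε := by
          rw [hφval]; exact le_max_right _ _
        have h2 : S i ε - L i - A i * ε - B i * ε ^ 2 ≤ ε ^ 2 * φ i ε := by
          have := mul_le_mul_of_nonneg_left h1 hε2.le
          rwa [mul_div_cancel₀ _ hε2.ne'] at this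
        linarith
    have hsum : ∑ i, S i ε ≤ ∑ i, L i + ∑ i, A i * ε + ∑ i, B i * ε ^ 2
        + ∑ i, ε ^ 2 * φ i ε := by
      refine (Finset.sum_le_sum fun i _ => hterm i).trans_eq ?_
      rw [Finset.sum_add_distrib, Finset.sum_add_distrib, Finset.sum_add_distrib]
    have hmid : (1 / (2 * (n:ℝ))) * ∑ i, |h'' (f (z i))| * ‖gradf (z i)‖ ^ 2 * ε ^ 2
        = (1 / (n:ℝ)) * ∑ i, B i * ε ^ 2 := by
      have : ∑ i, |h'' (f (z i))| * ‖gradf (z i)‖ ^ 2 * ε ^ 2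
          = 2 * ∑ i, B i * ε ^ 2 := by
        rw [Finset.mul_sum]
        exact Finset.sum_congr rfl fun i _ => by simp [hBdef]; ring
      rw [this]
      field_simp
      ring
      exact Finset.sum_congr rfl fun i _ => mul_comm _ _
    rw [hmid]
    have hA' : ∑ i, |h' (f (z i)) - y i| * ‖gradf (z i)‖ * ε = ∑ i, A i * ε := by
      exact Finset.sum_congr rfl fun i _ => by simp [hAdef]
    rw [hA']
    calc (1 / (n:ℝ)) * ∑ i, S i ε - (1 / (n:ℝ)) * ∑ i, L i
        = (1 / (n:ℝ)) * (∑ i, S i ε - ∑ i, L i) := by ring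
      _ ≤ (1 / (n:ℝ)) * (∑ i, A i * ε + ∑ i, B i * ε ^ 2 + ∑ i, ε ^ 2 * φ i ε) := by
          apply mul_le_mul_of_nonneg_left _ (by positivity)
          linarith
      _ = (1 / (n:ℝ)) * ∑ i, A i * ε + (1 / (n:ℝ)) * ∑ i, B i * ε ^ 2
          + (1 / (n:ℝ)) * ∑ i, ε ^ 2 * φ i ε := by ring
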